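/- arXiv:1009.1647 — 2 statements merged into one kernel-verified Lean document; each statement's English description precedes it below -/
import Mathlib

section
/- Let G be a group with a convergence group action on a compact metrizable space M with at least three points, and let H and J be dynamically quasiconvex subgroups of G with Λ(H) = Λ(J). If |Λ(H)| ≥ 2, then H and J are commensurable, i.e. H ∩ J has finite index in both H and J. -/
open Pointwise Filter Topology Set

section ConvergenceGroups

variable (G M : Type*) [Group G] [TopologicalSpace M] [MulAction G M]

/-- A convergence group action: the action is by homeomorphisms (each element acts
continuously, hence as a homeomorphism since the action is by a group), and the induced
diagonal action on the space of distinct triples of points of `M` is properly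
discontinuous. -/
def IsConvergenceAction : Prop :=
  (∀ g : G, Continuous fun x : M => g • x) ∧
    ∀ K L : Set (M × M × M), IsCompact K → IsCompact L →
      (∀ t ∈ K ∪ L, t.1 ≠ t.2.1 ∧ t.1 ≠ t.2.2 ∧ t.2.1 ≠ t.2.2) →
      {g : G | ((g • K) ∩ L).Nonempty}.Finite

/-- The limit set of a subgroup `H ≤ G`: the set of accumulation points in `M` of
the `H`-orbits of points of `M`. -/
def limitSet (H : Subgroup G) : Set M :=
  {x : M | ∃ m : M, x ∈ closure (((fun h : G => h • m) '' (H : Set G)) \ {x})}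

/-- `z` is a conical limit point of the subgroup `H`. -/
def IsConicalLimitPoint (H : Subgroup G) (z : M) : Prop :=
  ∃ (h : ℕ → G) (a b : M), (∀ n, h n ∈ H) ∧ a ≠ b ∧
    Tendsto (fun n => h n • z) atTop (nhds a) ∧
    ∀ q : M, q ≠ z → Tendsto (fun n => h n • q) atTop (nhds b)

/-- `g` is loxodromic: it has infinite order and fixes exactly two points of `M`. -/
def IsLoxodromic (g : G) : Prop :=
  ¬ IsOfFinOrder g ∧ {x : M | g • x = x}.encard = 2

/-- `p` is a bounded parabolic point of the subgroup `H`: its stabilizer in `H` is an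
infinite subgroup containing no loxodromic element, which acts cocompactly on
`Λ(H) \ {p}`. -/
def IsBoundedParabolicPoint (H : Subgroup G) (p : M) : Prop :=
  ((H ⊓ MulAction.stabilizer G p : Subgroup G) : Set G).Infinite ∧
  (∀ g ∈ H ⊓ MulAction.stabilizer G p, ¬ IsLoxodromic G M g) ∧
  ∃ C : Set M, IsCompact C ∧ C ⊆ limitSet G M H \ {p} ∧
    limitSet G M H \ {p} ⊆ ⋃ g ∈ (H ⊓ MulAction.stabilizer G p : Subgroup G), g • C

/-- `H` is dynamically quasiconvex: for every pair of disjoint closed subsets `K, L` of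
`M`, the set of cosets `gH` with `gΛ(H)` meeting both `K` and `L` is finite. -/
def DynamicallyQuasiconvex (H : Subgroup G) : Prop :=
  ∀ K L : Set M, IsClosed K → IsClosed L → Disjoint K L →
    ((fun g : G => (g : G ⧸ H)) ''
      {g : G | ((g • limitSet G M H) ∩ K).Nonempty ∧
               ((g • limitSet G M H) ∩ L).Nonempty}).Finite

end ConvergenceGroups

/-!
Each subgroup preserves its own limit set, so every `h ∈ H` carries `Λ(J) = Λ(H)` onto itself.
Fixing two distinct points `a, b ∈ Λ(J)`, every translate `hΛ(J)` with `h ∈ H` meets both `{a}`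
and `{b}`, so dynamical quasiconvexity of `J` leaves only finitely many cosets `hJ`: `H ∩ J` has
finite index in `H`. The same argument with the roles of `H` and `J` exchanged gives the rest.
-/

section LimitSet

variable {G M : Type*} [Group G] [TopologicalSpace M] [MulAction G M]

lemma smul_mem_limitSet {H : Subgroup G} {h : G} (hh : h ∈ H)
    (hcont : Continuous fun x : M => h • x) {x : M} (hx : x ∈ limitSet G M H) :
    h • x ∈ limitSet G M H := by
  obtain ⟨m, hm⟩ := hx
  refine ⟨m, closure_mono ?_ (image_closure_subset_closure_image hcont ⟨x, hm, rfl⟩)⟩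
  rw [image_sdiff (MulAction.injective h), image_singleton]
  refine sdiff_subset_sdiff_left ?_
  rintro _ ⟨_, ⟨g, hg, rfl⟩, rfl⟩
  exact ⟨h * g, H.mul_mem hh hg, mul_smul h g m⟩

lemma le_stabilizer_limitSet (hcont : ∀ g : G, Continuous fun x : M => g • x)
    (H : Subgroup G) : H ≤ MulAction.stabilizer G (limitSet G M H) := by
  intro h hh
  refine MulAction.mem_stabilizer_set.mpr fun x => ⟨fun hx => ?_, smul_mem_limitSet hh (hcont h)⟩
  simpa using smul_mem_limitSet (H.inv_mem hh) (hcont h⁻¹) hx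

end LimitSet

lemma Subgroup.relIndex_ne_zero_of_finite_image_mk {G : Type*} [Group G] {H J : Subgroup G}
    (hfin : ((↑) '' (H : Set G) : Set (G ⧸ J)).Finite) : J.relIndex H ≠ 0 := by
  have smul_one (h : H) : h • ((1 : G) : G ⧸ J) = ((h : G) : G ⧸ J) := by
    change (h : G) • ((1 : G) : G ⧸ J) = _
    rw [MulAction.Quotient.smul_mk, smul_eq_mul, mul_one]
  have hstab : MulAction.stabilizer H ((1 : G) : G ⧸ J) = J.subgroupOf H := by
    ext h
    rw [MulAction.mem_stabilizer_iff, smul_one, QuotientGroup.eq, mul_one, inv_mem_iff,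
      Subgroup.mem_subgroupOf]
  have horbit : MulAction.orbit H ((1 : G) : G ⧸ J) = (↑) '' (H : Set G) := by
    ext q
    simp only [MulAction.mem_orbit_iff, smul_one, Subtype.exists, mem_image, SetLike.mem_coe,
      exists_prop]
  rw [Subgroup.relIndex, ← hstab, MulAction.index_stabilizer, horbit]
  exact ncard_ne_zero_of_mem ⟨1, H.one_mem, rfl⟩ hfin

lemma DynamicallyQuasiconvex.relIndex_ne_zero {G M : Type*} [Group G] [TopologicalSpace M]
    [T1Space M] [MulAction G M] {J W : Subgroup G} (hJ : DynamicallyQuasiconvex G M J)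
    (hΛ : (limitSet G M J).Nontrivial) (hW : W ≤ MulAction.stabilizer G (limitSet G M J)) :
    J.relIndex W ≠ 0 := by
  obtain ⟨a, ha, b, hb, hab⟩ := hΛ
  refine Subgroup.relIndex_ne_zero_of_finite_image_mk <|
    (hJ {a} {b} isClosed_singleton isClosed_singleton (disjoint_singleton.mpr hab)).subset
      (image_mono fun w hw => ?_)
  have hwΛ : w • limitSet G M J = limitSet G M J := hW hw
  exact ⟨⟨a, by rwa [hwΛ], rfl⟩, ⟨b, by rwa [hwΛ], rfl⟩⟩

theorem commensurable_of_same_limit_set_general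
    {G M : Type*} [Group G] [TopologicalSpace M]
    [TopologicalSpace.MetrizableSpace M] [MulAction G M]
    (hconv : IsConvergenceAction G M)
    (H J : Subgroup G)
    (hdqcH : DynamicallyQuasiconvex G M H) (hdqcJ : DynamicallyQuasiconvex G M J)
    (hHJ : limitSet G M H = limitSet G M J)
    (hΛ : 2 ≤ (limitSet G M H).encard) :
    (H ⊓ J).relIndex H ≠ 0 ∧ (H ⊓ J).relIndex J ≠ 0 := by
  have hΛH : (limitSet G M H).Nontrivial :=
    one_lt_encard_iff_nontrivial.mp (lt_of_lt_of_le (by norm_num) hΛ)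
  have hΛJ : (limitSet G M J).Nontrivial := hHJ ▸ hΛH
  have hstabH := le_stabilizer_limitSet hconv.1 H
  have hstabJ := le_stabilizer_limitSet hconv.1 J
  rw [hHJ] at hstabH
  rw [← hHJ] at hstabJ
  constructor
  · rw [Subgroup.inf_relIndex_left]
    exact hdqcJ.relIndex_ne_zero hΛJ hstabH
  · rw [Subgroup.inf_relIndex_right]
    exact hdqcH.relIndex_ne_zero hΛH hstabJ

/-- two dynamically quasiconvex subgroups with the same limit set of
cardinality at least two are commensurable. -/
theorem commensurable_of_same_limit_set
    {G M : Type*} [Group G] [TopologicalSpace M] [CompactSpace M]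
    [TopologicalSpace.MetrizableSpace M] [MulAction G M]
    (hconv : IsConvergenceAction G M)
    (h3 : ∃ a b c : M, a ≠ b ∧ a ≠ c ∧ b ≠ c)
    (H J : Subgroup G)
    (hdqcH : DynamicallyQuasiconvex G M H) (hdqcJ : DynamicallyQuasiconvex G M J)
    (hHJ : limitSet G M H = limitSet G M J)
    (hΛ : 2 ≤ (limitSet G M H).encard) :
    (H ⊓ J).relIndex H ≠ 0 ∧ (H ⊓ J).relIndex J ≠ 0 :=
  commensurable_of_same_limit_set_general hconv H J hdqcH hdqcJ hHJ hΛ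
end

section
/- Let G be a group with a convergence group action on a compact metrizable space M with at least three points, let H ≤ G with |Λ(H)| ≥ 2, and let L be the commensurator of H in G. Then L leaves Λ(H) invariant and Λ(L) = Λ(H). -/
/-!
Commensurable subgroups have the same limit set, because a finite-index subgroup `J ≤ K` covers
every `K`-orbit by finitely many `J`-orbits; together with `g • Λ(H) = Λ(gHg⁻¹)` this shows that the
commensurator `L` of `H` preserves `Λ(H)`.

For `Λ(L) ⊆ Λ(H)`: proper discontinuity on distinct triples says, in ultrafilter form, that every
nonprincipal ultrafilter on `G` collapses `M` minus a repelling point onto an attracting point.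
Hence `Λ(K)` is the closure of the attracting points of ultrafilters on `K`, and so it is the
smallest closed `K`-invariant subset of `M` with at least two points. `Λ(H)` is such a set for `L`.
-/

open Pointwise Filter Topology Set

section

variable {G M : Type*} [Group G] [MulAction G M]

theorem exists_pair_ne_ne_of_three {α : Type*} {p q r : α} (hpq : p ≠ q) (hpr : p ≠ r)
    (hqr : q ≠ r) (x : α) :
    ∃ s ∈ ({p, q, r} : Set α), ∃ t ∈ ({p, q, r} : Set α), s ≠ t ∧ s ≠ x ∧ t ≠ x := by
  by_cases hp : p = x
  · subst hp
    exact ⟨q, by simp, r, by simp, hqr, hpq.symm, hpr.symm⟩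
  by_cases hq : q = x
  · subst hq
    exact ⟨p, by simp, r, by simp, hpr, hpq, hqr.symm⟩
  · exact ⟨p, by simp, q, by simp, hpq, hp, hq⟩

theorem exists_infinite_fiber_of_no_three_values {α β : Type*} [Infinite α] (f : α → β)
    (hf : ∀ x y z, f x ≠ f y → f x ≠ f z → f y = f z) : ∃ b, (f ⁻¹' {b}).Infinite := by
  obtain ⟨x₀⟩ := (inferInstance : Nonempty α)
  by_cases h₀ : (f ⁻¹' {f x₀}).Infinite
  · exact ⟨_, h₀⟩
  obtain ⟨x₁, hx₁⟩ := (Set.not_infinite.1 h₀).infinite_compl.nonempty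
  refine ⟨f x₁, (Set.not_infinite.1 h₀).infinite_compl.mono fun x hx => ?_⟩
  exact (hf x₀ x₁ x (Ne.symm hx₁) (Ne.symm hx)).symm

theorem Subgroup.exists_finite_mul_cover_of_relIndex_ne_zero {H K : Subgroup G}
    (h : H.relIndex K ≠ 0) :
    ∃ T : Set G, T.Finite ∧ ∀ k ∈ K, ∃ j ∈ H ⊓ K, ∃ c ∈ T, j * c = k := by
  have : (H.subgroupOf K).FiniteIndex := ⟨h⟩
  -- Inverses of left-coset representatives are right-coset representatives.
  refine ⟨range fun q : K ⧸ H.subgroupOf K => ((q.out : K) : G)⁻¹, finite_range _,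
    fun k hk => ?_⟩
  obtain ⟨w, hw⟩ := QuotientGroup.mk_out_eq_mul (H.subgroupOf K) (⟨k, hk⟩ : K)⁻¹
  refine ⟨w, ⟨Subgroup.mem_subgroupOf.1 w.2, (w : K).2⟩, _, ⟨(⟨k, hk⟩⁻¹ : K), rfl⟩, ?_⟩
  simp [hw]

theorem Subgroup.le_commensurator (H : Subgroup G) :
    H ≤ Subgroup.Commensurable.commensurator H := fun h hh => by
  rw [Subgroup.Commensurable.commensurator_mem_iff,
    show ConjAct.toConjAct h • H = H from Subgroup.conj_smul_eq_self_of_mem hh]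

variable (M) in
def distinctTriples : Set (M × M × M) := {t | t.1 ≠ t.2.1 ∧ t.1 ≠ t.2.2 ∧ t.2.1 ≠ t.2.2}

theorem smul_mem_distinctTriples (g : G) {t : M × M × M} (ht : t ∈ distinctTriples M) :
    g • t ∈ distinctTriples M :=
  ⟨(MulAction.injective g).ne ht.1, (MulAction.injective g).ne ht.2.1,
    (MulAction.injective g).ne ht.2.2⟩

theorem Ultrafilter.map_inv_le_cofinite {𝒰 : Ultrafilter G} (h : (𝒰 : Filter G) ≤ cofinite) :
    (𝒰.map (·⁻¹) : Filter G) ≤ cofinite :=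
  (map_mono h).trans inv_injective.tendsto_cofinite

variable [TopologicalSpace M]

theorem limitSet_mono {H K : Subgroup G} (h : H ≤ K) : limitSet G M H ⊆ limitSet G M K :=
  fun _ ⟨m, hm⟩ => ⟨m, closure_mono (sdiff_subset_sdiff_left (image_mono h)) hm⟩

theorem limitSet_inf_of_relIndex_ne_zero {H K : Subgroup G} (h : H.relIndex K ≠ 0) :
    limitSet G M (H ⊓ K) = limitSet G M K := by
  refine (limitSet_mono inf_le_right).antisymm ?_
  rintro x ⟨m, hm⟩
  obtain ⟨T, hT, hcover⟩ := Subgroup.exists_finite_mul_cover_of_relIndex_ne_zero h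
  have hx : x ∈ ⋃ c ∈ T,
      closure ((fun h : G => h • c • m) '' ((H ⊓ K : Subgroup G) : Set G) \ {x}) := by
    rw [← hT.closure_biUnion]
    refine closure_mono ?_ hm
    rintro _ ⟨⟨k, hk, rfl⟩, hkx⟩
    obtain ⟨j, hj, c, hc, rfl⟩ := hcover k hk
    exact mem_biUnion hc ⟨⟨j, hj, (mul_smul j c m).symm⟩, hkx⟩
  obtain ⟨c, -, hc⟩ := mem_iUnion₂.1 hx
  exact ⟨c • m, hc⟩

theorem limitSet_eq_of_commensurable {H K : Subgroup G} (h : H.Commensurable K) :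
    limitSet G M H = limitSet G M K := by
  rw [← limitSet_inf_of_relIndex_ne_zero h.2, inf_comm, limitSet_inf_of_relIndex_ne_zero h.1]

theorem smul_limitSet_subset [ContinuousConstSMul G M] (g : G) (H : Subgroup G) :
    g • limitSet G M H ⊆ limitSet G M (ConjAct.toConjAct g • H) := by
  rintro _ ⟨x, ⟨m, hm⟩, rfl⟩
  have hgx : g • x ∈ closure (g • ((fun h : G => h • m) '' (H : Set G) \ {x})) := by
    rw [closure_smul]
    exact smul_mem_smul_set hm
  refine ⟨g • m, closure_mono ?_ hgx⟩
  rintro _ ⟨_, ⟨⟨h, hh, rfl⟩, hx⟩, rfl⟩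
  refine ⟨⟨g * h * g⁻¹, (Subgroup.mem_smul_pointwise_iff_exists _ _ _).2 ⟨h, hh, rfl⟩, ?_⟩, ?_⟩
  · simp [mul_smul]
  · simpa using hx

theorem smul_limitSet_of_mem_commensurator [ContinuousConstSMul G M] {H : Subgroup G} {g : G}
    (hg : g ∈ Subgroup.Commensurable.commensurator H) : g • limitSet G M H = limitSet G M H := by
  have hsub : ∀ g ∈ Subgroup.Commensurable.commensurator H, g • limitSet G M H ⊆ limitSet G M H :=
    fun g' hg' => (smul_limitSet_subset g' H).trans (limitSet_eq_of_commensurable hg').subset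
  refine (hsub g hg).antisymm fun x hx => ⟨g⁻¹ • x, ?_, smul_inv_smul g x⟩
  exact hsub _ (inv_mem hg) (smul_mem_smul_set hx)

theorem isOpen_distinctTriples [T2Space M] : IsOpen (distinctTriples M) :=
  (isOpen_ne_fun continuous_fst (continuous_fst.comp continuous_snd)).inter
    ((isOpen_ne_fun continuous_fst (continuous_snd.comp continuous_snd)).inter
      (isOpen_ne_fun (continuous_fst.comp continuous_snd) (continuous_snd.comp continuous_snd)))

/-- `h • w → a` as `h → l`, locally uniformly in `w ≠ b`: the product filter `l ×ˢ 𝓝 z` lets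
the point move while the group element escapes. -/
def IsCollapsing (l : Filter G) (a b : M) : Prop :=
  ∀ z ≠ b, Tendsto (fun q : G × M => q.1 • q.2) (l ×ˢ 𝓝 z) (𝓝 a)

theorem IsCollapsing.tendsto_smul {l : Filter G} {a b z : M} (h : IsCollapsing l a b)
    (hz : z ≠ b) {ι : Type*} {l' : Filter ι} {u : ι → G} {w : ι → M} (hu : Tendsto u l' l)
    (hw : Tendsto w l' (𝓝 z)) : Tendsto (fun i => u i • w i) l' (𝓝 a) :=
  (h z hz).comp (hu.prodMk hw)

theorem IsCollapsing.map_mul_left [ContinuousConstSMul G M] {l : Filter G} {a b : M}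
    (h : IsCollapsing l a b) (k : G) : IsCollapsing (l.map (k * ·)) (k • a) b := fun z hz => by
  rw [prod_map_left, tendsto_map'_iff]
  simpa [Function.comp_def, mul_smul] using ((continuous_const_smul k).tendsto a).comp (h z hz)

def attractors (K : Subgroup G) : Set M :=
  {a | ∃ 𝒰 : Ultrafilter G, (K : Set G) ∈ 𝒰 ∧ ∃ b, IsCollapsing (𝒰 : Filter G) a b}

theorem smul_mem_attractors [ContinuousConstSMul G M] {K : Subgroup G} {k : G} (hk : k ∈ K)
    {a : M} (ha : a ∈ attractors K) : k • a ∈ attractors K := by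
  obtain ⟨𝒰, hK, b, h⟩ := ha
  refine ⟨𝒰.map (k * ·), Ultrafilter.mem_map.2 (mem_of_superset hK fun h hh => K.mul_mem hk hh),
    b, ?_⟩
  rw [Ultrafilter.coe_map]
  exact h.map_mul_left k

theorem attractors_subset_of_isClosed {K : Subgroup G} {C : Set M} (hC : IsClosed C)
    (hC2 : 2 ≤ C.encard) (hinv : ∀ k ∈ K, k • C ⊆ C) : attractors K ⊆ C := by
  rintro y ⟨𝒰, hK, b, h⟩
  obtain ⟨r, hr, hrb⟩ := exists_ne_of_one_lt_encard (lt_of_lt_of_le (by norm_num) hC2) b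
  exact hC.mem_of_tendsto (h.tendsto_smul hrb tendsto_id tendsto_const_nhds)
    (mem_of_superset hK fun k hk => hinv k hk (smul_mem_smul_set hr))

theorem closure_attractors_subset_limitSet (h3 : ∃ a b c : M, a ≠ b ∧ a ≠ c ∧ b ≠ c)
    (K : Subgroup G) : closure (attractors K) ⊆ limitSet G M K := by
  obtain ⟨p, q, r, hpq, hpr, hqr⟩ := h3
  intro x hx
  suffices x ∈ closure (⋃ m ∈ ({p, q, r} : Set M), (fun h : G => h • m) '' (K : Set G) \ {x}) by
    rw [(toFinite _).closure_biUnion] at this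
    obtain ⟨m, -, hm⟩ := mem_iUnion₂.1 this
    exact ⟨m, hm⟩
  rw [mem_closure_iff] at hx ⊢
  intro U hU hxU
  obtain ⟨y, hyU, 𝒰, hK, b, h⟩ := hx U hU hxU
  obtain ⟨s, hs, t, ht, hst, hsb, htb⟩ := exists_pair_ne_ne_of_three hpq hpr hqr b
  have hUy := hU.mem_nhds hyU
  obtain ⟨g, hgK, hgs, hgt⟩ := ((show ∀ᶠ g in (𝒰 : Filter G), g ∈ K from hK).and
    (((h.tendsto_smul hsb tendsto_id tendsto_const_nhds).eventually_mem hUy).and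
      ((h.tendsto_smul htb tendsto_id tendsto_const_nhds).eventually_mem hUy))).exists
  by_cases hsx : g • s = x
  · refine ⟨g • t, hgt, mem_biUnion ht ⟨⟨g, hgK, rfl⟩, fun htx => hst ?_⟩⟩
    exact smul_left_cancel g (hsx.trans htx.symm)
  · exact ⟨g • s, hgs, mem_biUnion hs ⟨⟨g, hgK, rfl⟩, hsx⟩⟩

theorem exists_ultrafilter_of_mem_limitSet [T1Space M] {K : Subgroup G} {x : M}
    (hx : x ∈ limitSet G M K) : ∃ m : M, ∃ 𝒰 : Ultrafilter G, (𝒰 : Filter G) ≤ cofinite ∧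
      (K : Set G) ∈ 𝒰 ∧ Tendsto (· • m) (𝒰 : Filter G) (𝓝 x) := by
  obtain ⟨m, hm⟩ := hx
  rw [← image_sdiff_preimage, mem_closure_iff_clusterPt, ← map_principal] at hm
  obtain ⟨𝒰, h𝒰S, h𝒰x⟩ := mapClusterPt_iff_ultrafilter.1 hm
  rw [le_principal_iff] at h𝒰S
  refine ⟨m, 𝒰, ?_, mem_of_superset h𝒰S fun h hh => hh.1, h𝒰x⟩
  rcases 𝒰.le_cofinite_or_eq_pure with h | ⟨g, rfl⟩
  · exact h
  · rw [Ultrafilter.coe_pure, Tendsto, map_pure, pure_le_nhds_iff] at h𝒰x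
    exact absurd h𝒰x (Ultrafilter.mem_pure.1 h𝒰S).2

namespace IsConvergenceAction

theorem infinite (hconv : IsConvergenceAction G M) [Infinite G]
    (h3 : ∃ a b c : M, a ≠ b ∧ a ≠ c ∧ b ≠ c) : Infinite M := by
  by_contra hfin
  rw [not_infinite_iff_finite] at hfin
  obtain ⟨a, b, c, habc⟩ := h3
  have hD : IsCompact (distinctTriples M) := (toFinite _).isCompact
  refine (hconv.2 _ _ hD hD fun t ht => ht.elim id id).not_infinite
    (infinite_univ.mono fun g _ => ?_)
  exact ⟨g • (a, b, c), smul_mem_smul_set habc, smul_mem_distinctTriples g habc⟩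

variable [CompactSpace M] [T2Space M]

theorem not_tendsto_smul_triple (hconv : IsConvergenceAction G M) {ι : Type*} {l : Filter ι}
    [l.NeBot] {g : ι → G} (hg : Tendsto g l cofinite) {t : ι → M × M × M}
    {t₀ t₁ : M × M × M} (ht₀ : t₀ ∈ distinctTriples M) (ht₁ : t₁ ∈ distinctTriples M)
    (ht : Tendsto t l (𝓝 t₀)) : ¬ Tendsto (fun i => g i • t i) l (𝓝 t₁) := by
  intro hgt
  obtain ⟨K, hK, hKD, hKc⟩ := local_compact_nhds (isOpen_distinctTriples.mem_nhds ht₀)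
  obtain ⟨L, hL, hLD, hLc⟩ := local_compact_nhds (isOpen_distinctTriples.mem_nhds ht₁)
  have hfin := hconv.2 K L hKc hLc fun s hs => hs.elim (fun h => hKD h) (fun h => hLD h)
  obtain ⟨i, hiK, hiL, hi⟩ := ((ht.eventually_mem hK).and
    ((hgt.eventually_mem hL).and (hg.eventually_mem hfin.compl_mem_cofinite))).exists
  exact hi ⟨g i • t i, smul_mem_smul_set hiK, hiL⟩

theorem exists_infinite_limit_fiber (hconv : IsConvergenceAction G M) [Infinite M]
    (𝒰 : Ultrafilter G) (h𝒰 : (𝒰 : Filter G) ≤ cofinite) :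
    ∃ a, {p : M | Tendsto (· • p) (𝒰 : Filter G) (𝓝 a)}.Infinite := by
  have hlim (p : M) : ∃ a, Tendsto (· • p) (𝒰 : Filter G) (𝓝 a) := by
    obtain ⟨a, -, ha⟩ := isCompact_univ.ultrafilter_le_nhds (𝒰.map (· • p)) (by simp)
    exact ⟨a, ha⟩
  choose A hA using hlim
  obtain ⟨a, ha⟩ := exists_infinite_fiber_of_no_three_values A fun x y z hxy hxz => by
    by_contra hyz
    refine hconv.not_tendsto_smul_triple (tendsto_id'.2 h𝒰) (t := fun _ => (x, y, z))
      (t₁ := (A x, A y, A z)) ⟨ne_of_apply_ne A hxy, ne_of_apply_ne A hxz, ne_of_apply_ne A hyz⟩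
      ⟨hxy, hxz, hyz⟩ tendsto_const_nhds ?_
    exact (hA x).prodMk_nhds ((hA y).prodMk_nhds (hA z))
  exact ⟨a, ha.mono fun p (hp : A p = a) => hp ▸ hA p⟩

theorem exists_isCollapsing (hconv : IsConvergenceAction G M)
    (h3 : ∃ a b c : M, a ≠ b ∧ a ≠ c ∧ b ≠ c) (𝒰 : Ultrafilter G)
    (h𝒰 : (𝒰 : Filter G) ≤ cofinite) : ∃ a b : M, IsCollapsing (𝒰 : Filter G) a b := by
  have : Infinite G := by
    rw [← not_finite_iff_infinite, ← cofinite_eq_bot_iff]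
    exact fun h => 𝒰.neBot.ne (le_bot_iff.1 (h ▸ h𝒰))
  have := hconv.infinite h3
  obtain ⟨a, hA⟩ := hconv.exists_infinite_limit_fiber 𝒰 h𝒰
  obtain ⟨b, hB⟩ := hconv.exists_infinite_limit_fiber _ (Ultrafilter.map_inv_le_cofinite h𝒰)
  refine ⟨a, b, fun z hzb => isCompact_univ.tendsto_nhds_of_unique_mapClusterPt (by simp)
    fun c _ hc => ?_⟩
  by_contra hca
  -- With `h • Q → a` and `h⁻¹ • P → b`, the triples `(w, Q, h⁻¹ • P) → (z, Q, b)` would be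
  -- sent to `(h • w, h • Q, P) → (c, a, P)`.
  obtain ⟨𝒱, h𝒱, hc⟩ := mapClusterPt_iff_ultrafilter.1 hc
  obtain ⟨Q, hQ, hQzb⟩ := (hA.sdiff (toFinite {z, b})).nonempty
  obtain ⟨P, hP, hPca⟩ := (hB.sdiff (toFinite {c, a})).nonempty
  simp only [mem_insert_iff, mem_singleton_iff, not_or] at hQzb hPca
  simp only [Ultrafilter.coe_map, tendsto_map'_iff] at hQ hP
  have hfst : Tendsto Prod.fst (𝒱 : Filter (G × M)) 𝒰 := Filter.tendsto_fst.mono_left h𝒱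
  refine hconv.not_tendsto_smul_triple (hfst.mono_right h𝒰) (t := fun q => (q.2, Q, q.1⁻¹ • P))
    (t₀ := (z, Q, b)) (t₁ := (c, a, P)) ⟨Ne.symm hQzb.1, hzb, hQzb.2⟩
    ⟨hca, Ne.symm hPca.1, Ne.symm hPca.2⟩
    ((Filter.tendsto_snd.mono_left h𝒱).prodMk_nhds (tendsto_const_nhds.prodMk_nhds (hP.comp hfst)))
    ((hc.prodMk_nhds ((hQ.comp hfst).prodMk_nhds tendsto_const_nhds)).congr fun q => ?_)
  simp [Prod.smul_mk]

theorem isCollapsing_map_inv (hconv : IsConvergenceAction G M)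
    (h3 : ∃ a b c : M, a ≠ b ∧ a ≠ c ∧ b ≠ c) {𝒰 : Ultrafilter G}
    (h𝒰 : (𝒰 : Filter G) ≤ cofinite) {a b : M} (h : IsCollapsing (𝒰 : Filter G) a b) :
    ∃ b', IsCollapsing (𝒰.map (·⁻¹) : Filter G) b b' := by
  obtain ⟨a', b', h'⟩ := hconv.exists_isCollapsing h3 _ (Ultrafilter.map_inv_le_cofinite h𝒰)
  refine ⟨b', ?_⟩
  obtain rfl : a' = b := by
    by_contra hne
    have hfix : ∀ w ≠ b', w = a := fun w hw => by
      have hinv : Tendsto (fun g : G => g⁻¹ • w) 𝒰 (𝓝 a') :=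
        h'.tendsto_smul hw (by rw [Ultrafilter.coe_map]; exact tendsto_map) tendsto_const_nhds
      exact tendsto_nhds_unique tendsto_const_nhds
        ((h.tendsto_smul hne tendsto_id hinv).congr fun g => smul_inv_smul g w)
    obtain ⟨p, q, r, hpq, hpr, hqr⟩ := h3
    obtain ⟨s, -, t, -, hst, hs, ht⟩ := exists_pair_ne_ne_of_three hpq hpr hqr b'
    exact hst ((hfix s hs).trans (hfix t ht).symm)
  exact h'

theorem limitSet_subset_closure_attractors (hconv : IsConvergenceAction G M)
    (h3 : ∃ a b c : M, a ≠ b ∧ a ≠ c ∧ b ≠ c) (K : Subgroup G) :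
    limitSet G M K ⊆ closure (attractors K) := by
  intro x hx
  obtain ⟨m, 𝒰, h𝒰, hK, hx⟩ := exists_ultrafilter_of_mem_limitSet hx
  obtain ⟨a, b, h⟩ := hconv.exists_isCollapsing h3 𝒰 h𝒰
  by_cases hmb : m = b
  · subst hmb
    obtain ⟨b', h'⟩ := hconv.isCollapsing_map_inv h3 h𝒰 h
    have hm : m ∈ attractors K := ⟨𝒰.map (·⁻¹),
      Ultrafilter.mem_map.2 (mem_of_superset hK fun k hk => K.inv_mem hk), b', h'⟩
    have : ContinuousConstSMul G M := ⟨hconv.1⟩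
    exact mem_closure_of_tendsto hx (mem_of_superset hK fun k hk => smul_mem_attractors hk hm)
  · rw [tendsto_nhds_unique hx (h.tendsto_smul hmb tendsto_id tendsto_const_nhds)]
    exact subset_closure ⟨𝒰, hK, b, h⟩

theorem closure_attractors_eq_limitSet (hconv : IsConvergenceAction G M)
    (h3 : ∃ a b c : M, a ≠ b ∧ a ≠ c ∧ b ≠ c) (K : Subgroup G) :
    closure (attractors K) = limitSet G M K :=
  (closure_attractors_subset_limitSet h3 K).antisymm (hconv.limitSet_subset_closure_attractors h3 K)

theorem isClosed_limitSet (hconv : IsConvergenceAction G M)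
    (h3 : ∃ a b c : M, a ≠ b ∧ a ≠ c ∧ b ≠ c) (K : Subgroup G) : IsClosed (limitSet G M K) :=
  hconv.closure_attractors_eq_limitSet h3 K ▸ isClosed_closure

theorem limitSet_subset_of_isClosed (hconv : IsConvergenceAction G M)
    (h3 : ∃ a b c : M, a ≠ b ∧ a ≠ c ∧ b ≠ c) {K : Subgroup G} {C : Set M} (hC : IsClosed C)
    (hC2 : 2 ≤ C.encard) (hinv : ∀ k ∈ K, k • C ⊆ C) : limitSet G M K ⊆ C := by
  rw [← hconv.closure_attractors_eq_limitSet h3]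
  exact closure_minimal (attractors_subset_of_isClosed hC hC2 hinv) hC

end IsConvergenceAction

end

/-- the commensurator `L` of a subgroup `H` with `|Λ(H)| ≥ 2` leaves
`Λ(H)` invariant, and `Λ(L) = Λ(H)`. -/
theorem commensurator_limit_set
    {G M : Type*} [Group G] [TopologicalSpace M] [CompactSpace M]
    [TopologicalSpace.MetrizableSpace M] [MulAction G M]
    (hconv : IsConvergenceAction G M)
    (h3 : ∃ a b c : M, a ≠ b ∧ a ≠ c ∧ b ≠ c)
    (H : Subgroup G)
    (hΛ : 2 ≤ (limitSet G M H).encard) :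
    (∀ g ∈ Subgroup.Commensurable.commensurator H, g • limitSet G M H = limitSet G M H) ∧
      limitSet G M (Subgroup.Commensurable.commensurator H) = limitSet G M H := by
  have : ContinuousConstSMul G M := ⟨hconv.1⟩
  have hinv : ∀ g ∈ Subgroup.Commensurable.commensurator H,
      g • limitSet G M H = limitSet G M H := fun _ hg => smul_limitSet_of_mem_commensurator hg
  refine ⟨hinv, (hconv.limitSet_subset_of_isClosed h3 (hconv.isClosed_limitSet h3 H) hΛ
    fun g hg => (hinv g hg).subset).antisymm (limitSet_mono H.le_commensurator)⟩
end
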